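/- arXiv:2603.14043 — 4 statements merged into one kernel-verified Lean document; each statement's English description precedes it below -/
import Mathlib

section
/- Let G be a finite simple graph on n vertices and t ≥ 2. For every vertex x_i of G, the monomial x_i^t belongs to the depolarization depol(P_t(Σ_t G)) of the t-path ideal of the suspension Σ_t G. Consequently the radical of depol(P_t(Σ_t G)) is the maximal ideal (x_1,...,x_n), and the quotient ring is Artinian. -/
open MvPolynomial

/-- `p : Fin t → V` is a path on `t` vertices in the graph `H`. -/
def IsPathOn {V : Type*} (H : SimpleGraph V) {t : ℕ} (p : Fin t → V) : Prop :=
  Function.Injective p ∧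
    ∀ (i : ℕ) (h : i + 1 < t), H.Adj (p ⟨i, by omega⟩) (p ⟨i + 1, h⟩)

/-- The `t`-path ideal of a graph. -/
noncomputable def pathIdeal {V : Type*} (k : Type*) [CommRing k] (H : SimpleGraph V) (t : ℕ) :
    Ideal (MvPolynomial V k) :=
  Ideal.span { m | ∃ p : Fin t → V, IsPathOn H p ∧ m = ∏ i, X (p i) }

/-- The suspension `Σ_t G`: attach a path of length `t-1` to each vertex. -/
def suspension {V : Type*} (G : SimpleGraph V) (t : ℕ) : SimpleGraph (V ⊕ V × Fin (t - 1)) where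
  Adj a b := match a, b with
    | .inl u, .inl v => G.Adj u v
    | .inl u, .inr (v, j) => u = v ∧ (j : ℕ) = 0
    | .inr (v, j), .inl u => u = v ∧ (j : ℕ) = 0
    | .inr (u, i), .inr (v, j) => u = v ∧ ((i : ℕ) + 1 = j ∨ (j : ℕ) + 1 = i)
  symm := by
    constructor
    rintro (u | ⟨u, i⟩) (v | ⟨v, j⟩) h
    · exact G.adj_symm h
    · exact h
    · exact h
    · exact ⟨h.1.symm, h.2.symm⟩
  loopless := by
    constructor
    rintro (u | ⟨u, i⟩) h
    · exact G.irrefl h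
    · rcases h with ⟨-, h⟩; omega

/-- The depolarization of the `t`-path ideal of `Σ_t G`, obtained by the substitution
`x_{ij} ↦ x_i`. -/
noncomputable def depolPathIdeal {V : Type*} (k : Type*) [CommRing k] (G : SimpleGraph V)
    (t : ℕ) : Ideal (MvPolynomial V k) :=
  (pathIdeal k (suspension G t) t).map (rename (Sum.elim id Prod.fst))

/-!
The path formed by `x_i` and the path attached to it depolarizes to `x_i ^ t`. Every generator of
the path ideal has a variable as a factor, so the depolarized ideal lies in the prime ideal
`(x_1, …, x_n)`, which is therefore its radical. Modulo the ideal the variables are nilpotent,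
hence integral, algebra generators, so the quotient is finite-dimensional and thus Artinian.
-/

namespace MvPolynomial

variable {σ R : Type*} [CommRing R]

theorem idealOfVars_eq_ker_constantCoeff :
    idealOfVars σ R = RingHom.ker (constantCoeff : MvPolynomial σ R →+* R) := by
  ext p
  rw [← pow_one (idealOfVars σ R), mem_pow_idealOfVars_iff', RingHom.mem_ker]
  simp [Finsupp.degree_eq_zero_iff, constantCoeff_eq]

theorem isPrime_idealOfVars [IsDomain R] : (idealOfVars σ R).IsPrime := by
  rw [idealOfVars_eq_ker_constantCoeff]
  exact RingHom.ker_isPrime _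

theorem radical_eq_idealOfVars [IsDomain R] {I : Ideal (MvPolynomial σ R)}
    (hI : I ≤ idealOfVars σ R) {t : ℕ} (hX : ∀ i, X i ^ t ∈ I) :
    I.radical = idealOfVars σ R :=
  le_antisymm (isPrime_idealOfVars.radical_le_iff.mpr hI)
    (Ideal.span_le.mpr <| Set.range_subset_iff.mpr fun i => ⟨t, hX i⟩)

theorem finite_quotient_of_X_pow_mem [Finite σ] {I : Ideal (MvPolynomial σ R)} {t : ℕ}
    (hX : ∀ i, X i ^ t ∈ I) : Module.Finite R (MvPolynomial σ R ⧸ I) := by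
  have hgen : Algebra.adjoin R (Set.range fun i => Ideal.Quotient.mk I (X i)) = ⊤ := by
    rw [Algebra.adjoin_range_eq_range_aeval, ← mkₐ_eq_aeval, AlgHom.range_eq_top]
    exact Ideal.Quotient.mkₐ_surjective R I
  have hint : ∀ x ∈ Set.range fun i => Ideal.Quotient.mk I (X i), IsIntegral R x := by
    rintro _ ⟨i, rfl⟩
    refine ⟨Polynomial.X ^ t, Polynomial.monic_X_pow t, ?_⟩
    rw [Polynomial.eval₂_X_pow, ← map_pow, Ideal.Quotient.eq_zero_iff_mem]
    exact hX i
  rw [Module.finite_def, ← Algebra.top_toSubmodule, ← hgen]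
  exact fg_adjoin_of_finite (Set.finite_range _) hint

end MvPolynomial

section Suspension

variable {V : Type*}

/-- The path `x_i, x_{i1}, …, x_{i,t-1}` of `Σ_t G`. -/
def suspensionPath (t : ℕ) (i : V) : Fin t → V ⊕ V × Fin (t - 1) := fun j =>
  if h : (j : ℕ) = 0 then .inl i else .inr (i, ⟨j - 1, by omega⟩)

theorem isPathOn_suspensionPath (G : SimpleGraph V) (t : ℕ) (i : V) :
    IsPathOn (suspension G t) (suspensionPath t i) := by
  refine ⟨fun a b hab => ?_, fun j hj => ?_⟩
  · unfold suspensionPath at hab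
    split_ifs at hab
    · exact Fin.ext (by omega)
    · simp only [Sum.inr.injEq, Prod.mk.injEq, Fin.mk.injEq, true_and] at hab
      exact Fin.ext (by omega)
  · simp only [suspensionPath, Nat.add_one_ne_zero, dite_false]
    split_ifs with hj0
    · exact ⟨rfl, by simp [hj0]⟩
    · exact ⟨rfl, Or.inl (by simp; omega)⟩

theorem depolarize_suspensionPath (t : ℕ) (i : V) (j : Fin t) :
    Sum.elim id Prod.fst (suspensionPath t i j) = i := by
  unfold suspensionPath
  split_ifs <;> rfl

theorem X_pow_mem_depolPathIdeal (k : Type*) [CommRing k] (G : SimpleGraph V) (t : ℕ) (i : V) :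
    (X i : MvPolynomial V k) ^ t ∈ depolPathIdeal k G t := by
  have hpath : (∏ j, X (suspensionPath t i j) : MvPolynomial _ k) ∈
      pathIdeal k (suspension G t) t :=
    Ideal.subset_span ⟨_, isPathOn_suspensionPath G t i, rfl⟩
  simpa only [depolPathIdeal, map_prod, rename_X, depolarize_suspensionPath, Finset.prod_const,
    Finset.card_univ, Fintype.card_fin] using
    Ideal.mem_map_of_mem (rename (Sum.elim id Prod.fst)) hpath

theorem depolPathIdeal_le_idealOfVars (k : Type*) [CommRing k] (G : SimpleGraph V) {t : ℕ}
    (ht : 0 < t) : depolPathIdeal k G t ≤ idealOfVars V k := by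
  rw [depolPathIdeal, Ideal.map_le_iff_le_comap, pathIdeal, Ideal.span_le]
  rintro _ ⟨p, -, rfl⟩
  rw [SetLike.mem_coe, Ideal.mem_comap, map_prod]
  refine Ideal.prod_mem _ (Finset.mem_univ ⟨0, ht⟩) ?_
  rw [rename_X]
  exact Ideal.subset_span ⟨_, rfl⟩

end Suspension

/-- For any graph `G` on `n` vertices and `t ≥ 2`, each `x_i^t` lies in the
depolarized `t`-path ideal of `Σ_t G`; hence its radical is the maximal ideal and
the quotient ring is Artinian. -/
theorem stmt6 {k : Type*} [Field k] {n : ℕ} (G : SimpleGraph (Fin n)) (t : ℕ) (ht : 2 ≤ t) :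
    (∀ i : Fin n, (X i : MvPolynomial (Fin n) k) ^ t ∈ depolPathIdeal k G t) ∧
    (depolPathIdeal k G t).radical =
      Ideal.span (Set.range (X : Fin n → MvPolynomial (Fin n) k)) ∧
    IsArtinianRing (MvPolynomial (Fin n) k ⧸ depolPathIdeal k G t) := by
  have hX := X_pow_mem_depolPathIdeal k G t
  have := finite_quotient_of_X_pow_mem hX
  exact ⟨hX, radical_eq_idealOfVars (depolPathIdeal_le_idealOfVars k G (by omega)) hX,
    IsArtinianRing.of_finite k _⟩
end

section
/- Let G be a finite simple graph on vertices x_1,...,x_n, t ≥ 2, and suppose {x_1, x_2} is an edge of G. Then (x_1, x_2)^t ⊆ depol(P_t(Σ_t G)). In particular, the depolarized t-path ideal of Σ_t G contains x_1^{k+1} x_2^{t−1−k} for all 0 ≤ k ≤ t−2, as well as x_1^t and x_2^t. -/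
/-!
For `0 ≤ s ≤ t`, the monomial `x_a^s x_b^(t-s)` is the depolarization of a path of `Σ_t G` on
`t` vertices through the edge `ab`: descend the whisker of `a` from `x_{a,s-1}` to `x_a`, cross
to `x_b`, and climb the whisker of `b` up to `x_{b,t-s-1}`. These monomials generate
`(x_a, x_b)^t`.
-/

open MvPolynomial

theorem Ideal.span_pair_pow_le {R : Type*} [CommSemiring R] {f g : R} {I : Ideal R} {m : ℕ}
    (h : ∀ i ≤ m, f ^ i * g ^ (m - i) ∈ I) : Ideal.span {f, g} ^ m ≤ I := by
  rw [Ideal.span_insert, ← Ideal.add_eq_sup, add_pow, Ideal.sum_eq_sup, Finset.sup_le_iff]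
  intro i hi
  rw [Ideal.span_singleton_pow, Ideal.span_singleton_pow, Ideal.span_singleton_mul_span_singleton]
  exact Ideal.mul_le_left.trans <| (Ideal.span_singleton_le_iff_mem I).2 <|
    h i (Nat.lt_succ_iff.1 (Finset.mem_range.1 hi))

theorem Fin.prod_univ_ite_val_lt {M : Type*} [CommMonoid M] (x y : M) {s t : ℕ} (hst : s ≤ t) :
    ∏ i : Fin t, (if (i : ℕ) < s then x else y) = x ^ s * y ^ (t - s) := by
  rw [Finset.prod_ite, Finset.prod_const, Finset.prod_const, Fin.card_filter_val_lt,
    Finset.filter_not, Finset.card_sdiff_of_subset (Finset.filter_subset _ _),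
    Fin.card_filter_val_lt, Finset.card_univ, Fintype.card_fin, min_eq_right hst]

def suspensionEdgePath {V : Type*} (a b : V) {t s : ℕ} (hst : s ≤ t) :
    Fin t → V ⊕ V × Fin (t - 1) := fun i =>
  if h : (i : ℕ) + 1 < s then .inr (a, ⟨s - 2 - i, by omega⟩)
  else if h : (i : ℕ) + 1 = s then .inl a
  else if h : (i : ℕ) = s then .inl b
  else .inr (b, ⟨i - s - 1, by have := i.isLt; omega⟩)

section suspensionEdgePath

variable {V : Type*} {a b : V} {t s : ℕ}

theorem suspensionEdgePath_injective (hst : s ≤ t) (hab : a ≠ b) :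
    Function.Injective (suspensionEdgePath a b hst) := by
  intro i j h
  unfold suspensionEdgePath at h
  apply Fin.ext
  split_ifs at h <;>
    simp only [Sum.inl.injEq, Sum.inr.injEq, Prod.mk.injEq, hab, hab.symm, Fin.ext_iff,
      true_and, false_and] at h <;>
    omega

theorem suspensionEdgePath_isPathOn {G : SimpleGraph V} (hst : s ≤ t) (hab : G.Adj a b) :
    IsPathOn (suspension G t) (suspensionEdgePath a b hst) := by
  refine ⟨suspensionEdgePath_injective hst hab.ne, fun i hi => ?_⟩
  simp only [suspensionEdgePath]
  split_ifs <;> simp only [suspension, hab, true_and, SimpleGraph.irrefl] <;> omega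

theorem elim_suspensionEdgePath (hst : s ≤ t) (i : Fin t) :
    Sum.elim id Prod.fst (suspensionEdgePath a b hst i) = if (i : ℕ) < s then a else b := by
  unfold suspensionEdgePath
  split_ifs <;> first | rfl | omega

theorem X_pow_mul_X_pow_mem_depolPathIdeal {k : Type*} [CommRing k] {G : SimpleGraph V}
    (hab : G.Adj a b) (hst : s ≤ t) :
    (X a : MvPolynomial V k) ^ s * X b ^ (t - s) ∈ depolPathIdeal k G t := by
  have hpath : (∏ i, X (suspensionEdgePath a b hst i) : MvPolynomial _ k) ∈
      pathIdeal k (suspension G t) t :=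
    Ideal.subset_span ⟨_, suspensionEdgePath_isPathOn hst hab, rfl⟩
  have hdepol : rename (Sum.elim id Prod.fst) (∏ i, X (suspensionEdgePath a b hst i)) =
      (X a : MvPolynomial V k) ^ s * X b ^ (t - s) := by
    simp only [map_prod, rename_X, elim_suspensionEdgePath, apply_ite X]
    exact Fin.prod_univ_ite_val_lt _ _ hst
  exact hdepol ▸ Ideal.mem_map_of_mem _ hpath

end suspensionEdgePath

/-- If `{x_a, x_b}` is an edge of `G` and `t ≥ 2`, then `(x_a, x_b)^t` is contained in
the depolarized `t`-path ideal of `Σ_t G`; in particular it contains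
`x_a^{k+1} x_b^{t−1−k}` for `0 ≤ k ≤ t−2`, as well as `x_a^t` and `x_b^t`. -/
theorem stmt7 {k : Type*} [Field k] {n : ℕ} (G : SimpleGraph (Fin n)) (t : ℕ) (ht : 2 ≤ t)
    (a b : Fin n) (hab : G.Adj a b) :
    (Ideal.span {(X a : MvPolynomial (Fin n) k), X b}) ^ t ≤ depolPathIdeal k G t ∧
    (∀ j : ℕ, j ≤ t - 2 →
      (X a : MvPolynomial (Fin n) k) ^ (j + 1) * X b ^ (t - 1 - j) ∈ depolPathIdeal k G t) ∧
    (X a : MvPolynomial (Fin n) k) ^ t ∈ depolPathIdeal k G t ∧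
    (X b : MvPolynomial (Fin n) k) ^ t ∈ depolPathIdeal k G t := by
  have mem {s : ℕ} (hst : s ≤ t) := X_pow_mul_X_pow_mem_depolPathIdeal (k := k) hab hst
  refine ⟨Ideal.span_pair_pow_le fun s hst => mem hst, fun j hj => ?_, ?_, ?_⟩
  · simpa [show t - (j + 1) = t - 1 - j by omega] using mem (s := j + 1) (by omega)
  · simpa using mem le_rfl
  · simpa using mem (Nat.zero_le t)
end

section
/- Let t ≥ 3, n ≥ 2, and in T = k[x_{ij} : i ∈ [n], 0 ≤ j ≤ t−1] consider the ideals J' = (∏_{j=1}^{t−1} x_{1j}, ∏_{j=1}^{t−1} x_{2j}) + (∏_{j=0}^{t−1} x_{ij} : 3 ≤ i ≤ n) and I' = (∏_{j=1}^{l−1} x_{1j} · ∏_{j=1}^{t−1−l} x_{2j} : 1 ≤ l ≤ t−1) + (∏_{j=0}^{t−1} x_{ij} : 3 ≤ i ≤ n). Let J = (∏_{j=0}^{t−1} x_{ij} : i ∈ [n]) and I = J + (∏_{j=0}^{l−1} x_{1j} · ∏_{j=0}^{t−1−l} x_{2j} : 1 ≤ l ≤ t−1). Then J : I = J' : I' as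 ideals of T. -/
/-!
For a monomial ideal, `(X^e : e ∈ S) : X^s = (X^(e - s) : e ∈ S)` with truncated subtraction of
exponents. The generators of `I` other than the `g_l` lie in `J`, and those of `I'` other than
the `g'_l` lie in `J'`, so both sides are intersections over `l` of colon ideals by the single
monomials `g_l = ∏_{j<l} x_{1j} ∏_{j<t-l} x_{2j}` and `g'_l = g_l / (x_{10} x_{20})`. For each `l`,
removing `g_l` from the generators of `J` and `g'_l` from those of `J'` leaves the same exponents:
the tails `x_{1,l} ⋯ x_{1,t-1}` and `x_{2,t-l} ⋯ x_{2,t-1}` together with the full blocks `i ≥ 3`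
(in Lean the blocks are indexed from `0`, so these are the `i : Fin n` with `2 ≤ i`).
-/

open MvPolynomial

/-- The product `x_{i,a} x_{i,a+1} ⋯ x_{i,b-1}` of consecutive variables in the `i`-th
block. -/
noncomputable def blockProd {n t : ℕ} (k : Type*) [CommRing k] (i : Fin n) (a b : ℕ) :
    MvPolynomial (Fin n × Fin t) k :=
  ∏ j ∈ Finset.univ.filter (fun j : Fin t => a ≤ (j : ℕ) ∧ (j : ℕ) < b), X (i, j)

namespace MvPolynomial

variable {σ R : Type*} [CommSemiring R]

theorem span_monomial_image_colon_monomial (S : Set (σ →₀ ℕ)) (s : σ →₀ ℕ) :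
    (Ideal.span ((monomial · (1 : R)) '' S)).colon {monomial s 1} =
      Ideal.span ((monomial · (1 : R)) '' ((· - s) '' S)) := by
  ext r
  simp only [Submodule.mem_colon_singleton, smul_eq_mul, mem_ideal_span_monomial_image,
    Set.exists_mem_image, tsub_le_iff_right]
  constructor
  · intro h d hd
    exact h (d + s) (by simpa [coeff_mul_monomial] using hd)
  · intro h d hd
    rw [mem_support_iff, coeff_mul_monomial'] at hd
    split_ifs at hd with hsd
    · obtain ⟨e, he, hle⟩ := h (d - s) (by simpa using hd)
      exact ⟨e, he, hle.trans_eq (tsub_add_cancel_of_le hsd)⟩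
    · exact absurd rfl hd

end MvPolynomial

section Blocks

variable {n t : ℕ}

noncomputable def blockExp (i : Fin n) (a b : ℕ) : Fin n × Fin t →₀ ℕ :=
  ∑ j ∈ Finset.univ.filter (fun j : Fin t => a ≤ (j : ℕ) ∧ (j : ℕ) < b), Finsupp.single (i, j) 1

theorem blockProd_eq_monomial (k : Type*) [CommRing k] (i : Fin n) (a b : ℕ) :
    (blockProd k i a b : MvPolynomial (Fin n × Fin t) k) = monomial (blockExp i a b) 1 := by
  rw [blockExp, monomial_sum_one]
  rfl

theorem blockExp_apply (i : Fin n) (a b : ℕ) (p : Fin n × Fin t) :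
    blockExp i a b p = if p.1 = i ∧ a ≤ (p.2 : ℕ) ∧ (p.2 : ℕ) < b then 1 else 0 := by
  classical
  obtain ⟨q, j⟩ := p
  simp only [blockExp, Finsupp.finsetSum_apply, Finsupp.single_apply, Prod.mk.injEq]
  by_cases hq : i = q
  · subst hq
    simp [Finset.sum_ite_eq']
  · simp [hq, Ne.symm hq]

theorem blockExp_tsub_of_ne {i j : Fin n} (h : i ≠ j) (a b c d : ℕ) :
    (blockExp i a b : Fin n × Fin t →₀ ℕ) - blockExp j c d = blockExp i a b := by
  ext p
  simp only [Finsupp.tsub_apply, blockExp_apply]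
  split_ifs <;> simp_all

theorem blockExp_tsub_blockExp (i : Fin n) {a c : ℕ} (h : a ≤ c) (b : ℕ) :
    (blockExp i a b : Fin n × Fin t →₀ ℕ) - blockExp i a c = blockExp i c b := by
  ext p
  simp only [Finsupp.tsub_apply, blockExp_apply]
  split_ifs <;> omega

theorem blockExp_tsub_add {i j : Fin n} (h : i ≠ j) {c l : ℕ} (hc : c ≤ l) (b c' l' : ℕ) :
    (blockExp i c b : Fin n × Fin t →₀ ℕ) - (blockExp i c l + blockExp j c' l') =
      blockExp i l b := by
  rw [tsub_add_eq_tsub_tsub, blockExp_tsub_blockExp i hc, blockExp_tsub_of_ne h]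

theorem blockExp_tsub_add_of_ne {i j j' : Fin n} (h : i ≠ j) (h' : i ≠ j') (a b c d c' d' : ℕ) :
    (blockExp i a b : Fin n × Fin t →₀ ℕ) - (blockExp j c d + blockExp j' c' d') =
      blockExp i a b := by
  rw [tsub_add_eq_tsub_tsub, blockExp_tsub_of_ne h, blockExp_tsub_of_ne h']

end Blocks

section PathIdeal

variable {n t : ℕ} {x₁ x₂ : Fin n}

theorem two_le_iff_ne_and_ne (hx₁ : (x₁ : ℕ) = 0) (hx₂ : (x₂ : ℕ) = 1) (i : Fin n) :
    2 ≤ (i : ℕ) ↔ i ≠ x₁ ∧ i ≠ x₂ := by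
  simp only [ne_eq, Fin.ext_iff, hx₁, hx₂]
  omega

theorem image_tsub_blockExp_zero (hx₁ : (x₁ : ℕ) = 0) (hx₂ : (x₂ : ℕ) = 1) (l : ℕ) :
    (fun e : Fin n × Fin t →₀ ℕ => e - (blockExp x₁ 0 l + blockExp x₂ 0 (t - l))) ''
        {e | ∃ i : Fin n, e = blockExp i 0 t} =
      {blockExp x₁ l t, blockExp x₂ (t - l) t} ∪
        {e | ∃ i : Fin n, 2 ≤ (i : ℕ) ∧ e = blockExp i 0 t} := by
  have hne : x₁ ≠ x₂ := fun h => by simp [h, hx₂] at hx₁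
  have hx₁_res : (blockExp x₁ 0 t - (blockExp x₁ 0 l + blockExp x₂ 0 (t - l)) :
      Fin n × Fin t →₀ ℕ) = blockExp x₁ l t :=
    blockExp_tsub_add hne l.zero_le ..
  have hx₂_res : (blockExp x₂ 0 t - (blockExp x₁ 0 l + blockExp x₂ 0 (t - l)) :
      Fin n × Fin t →₀ ℕ) = blockExp x₂ (t - l) t := by
    rw [add_comm]
    exact blockExp_tsub_add hne.symm (t - l).zero_le ..
  ext e
  simp only [Set.mem_image, Set.mem_ofPred_eq, Set.mem_union, Set.mem_insert_iff,
    Set.mem_singleton_iff, two_le_iff_ne_and_ne hx₁ hx₂]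
  constructor
  · rintro ⟨_, ⟨i, rfl⟩, rfl⟩
    by_cases h₁ : i = x₁
    · exact Or.inl (Or.inl (h₁ ▸ hx₁_res))
    by_cases h₂ : i = x₂
    · exact Or.inl (Or.inr (h₂ ▸ hx₂_res))
    exact Or.inr ⟨i, ⟨h₁, h₂⟩, blockExp_tsub_add_of_ne h₁ h₂ ..⟩
  · rintro ((rfl | rfl) | ⟨i, ⟨h₁, h₂⟩, rfl⟩)
    · exact ⟨_, ⟨x₁, rfl⟩, hx₁_res⟩
    · exact ⟨_, ⟨x₂, rfl⟩, hx₂_res⟩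
    · exact ⟨_, ⟨i, rfl⟩, blockExp_tsub_add_of_ne h₁ h₂ ..⟩

theorem image_tsub_blockExp_one (hx₁ : (x₁ : ℕ) = 0) (hx₂ : (x₂ : ℕ) = 1) {l : ℕ}
    (hl₁ : 1 ≤ l) (hl₂ : l ≤ t - 1) :
    (fun e : Fin n × Fin t →₀ ℕ => e - (blockExp x₁ 1 l + blockExp x₂ 1 (t - l))) ''
        ({blockExp x₁ 1 t, blockExp x₂ 1 t} ∪
          {e | ∃ i : Fin n, 2 ≤ (i : ℕ) ∧ e = blockExp i 0 t}) =
      {blockExp x₁ l t, blockExp x₂ (t - l) t} ∪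
        {e | ∃ i : Fin n, 2 ≤ (i : ℕ) ∧ e = blockExp i 0 t} := by
  have hne : x₁ ≠ x₂ := fun h => by simp [h, hx₂] at hx₁
  rw [Set.image_union, Set.image_pair, blockExp_tsub_add hne hl₁,
    add_comm, blockExp_tsub_add hne.symm (by omega : 1 ≤ t - l)]
  congr 1
  ext e
  simp only [Set.mem_image, Set.mem_ofPred_eq, two_le_iff_ne_and_ne hx₁ hx₂]
  constructor
  · rintro ⟨_, ⟨i, hi, rfl⟩, rfl⟩
    exact ⟨i, hi, blockExp_tsub_add_of_ne hi.2 hi.1 ..⟩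
  · rintro ⟨i, hi, rfl⟩
    exact ⟨_, ⟨i, hi, rfl⟩, blockExp_tsub_add_of_ne hi.2 hi.1 ..⟩

theorem colon_blockProd_mul_blockProd_eq (k : Type*) [CommRing k]
    (hx₁ : (x₁ : ℕ) = 0) (hx₂ : (x₂ : ℕ) = 1) {l : ℕ} (hl₁ : 1 ≤ l) (hl₂ : l ≤ t - 1) :
    (Ideal.span {m | ∃ i : Fin n, m = blockProd k i 0 t} :
        Ideal (MvPolynomial (Fin n × Fin t) k)).colon
        {blockProd k x₁ 0 l * blockProd k x₂ 0 (t - l)} =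
      (Ideal.span ({blockProd k x₁ 1 t, blockProd k x₂ 1 t} ∪
          {m | ∃ i : Fin n, 2 ≤ (i : ℕ) ∧ m = blockProd k i 0 t})).colon
        {blockProd k x₁ 1 l * blockProd k x₂ 1 (t - l)} := by
  have hJ : {m : MvPolynomial (Fin n × Fin t) k | ∃ i : Fin n, m = blockProd k i 0 t} =
      (monomial · (1 : k)) '' {e | ∃ i : Fin n, e = blockExp i 0 t} := by
    ext; simp [blockProd_eq_monomial, eq_comm]
  have hJ' : ({blockProd k x₁ 1 t, blockProd k x₂ 1 t} ∪
        {m : MvPolynomial (Fin n × Fin t) k | ∃ i : Fin n, 2 ≤ (i : ℕ) ∧ m = blockProd k i 0 t}) =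
      (monomial · (1 : k)) '' ({blockExp x₁ 1 t, blockExp x₂ 1 t} ∪
        {e | ∃ i : Fin n, 2 ≤ (i : ℕ) ∧ e = blockExp i 0 t}) := by
    rw [Set.image_union, Set.image_pair, blockProd_eq_monomial, blockProd_eq_monomial]
    congr 1
    ext; simp [blockProd_eq_monomial, eq_comm]
  rw [hJ, hJ']
  simp only [blockProd_eq_monomial, monomial_mul, one_mul, span_monomial_image_colon_monomial,
    image_tsub_blockExp_zero hx₁ hx₂, image_tsub_blockExp_one hx₁ hx₂ hl₁ hl₂]

end PathIdeal

theorem stmt16_general {k : Type*} [Field k] {n t : ℕ}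
    (x₁ x₂ : Fin n) (hx₁ : (x₁ : ℕ) = 0) (hx₂ : (x₂ : ℕ) = 1)
    (J I J' I' : Ideal (MvPolynomial (Fin n × Fin t) k))
    (hJ : J = Ideal.span { m | ∃ i : Fin n, m = blockProd k i 0 t })
    (hI : I = J ⊔ Ideal.span { m | ∃ l : ℕ, 1 ≤ l ∧ l ≤ t - 1 ∧
      m = blockProd k x₁ 0 l * blockProd k x₂ 0 (t - l) })
    (hJ' : J' = Ideal.span ({blockProd k x₁ 1 t, blockProd k x₂ 1 t} ∪
      { m | ∃ i : Fin n, 2 ≤ (i : ℕ) ∧ m = blockProd k i 0 t }))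
    (hI' : I' = Ideal.span ({ m | ∃ l : ℕ, 1 ≤ l ∧ l ≤ t - 1 ∧
        m = blockProd k x₁ 1 l * blockProd k x₂ 1 (t - l) } ∪
      { m | ∃ i : Fin n, 2 ≤ (i : ℕ) ∧ m = blockProd k i 0 t })) :
    Submodule.colon J I = Submodule.colon J' I' := by
  have hJI : J.colon I = J.colon { m | ∃ l : ℕ, 1 ≤ l ∧ l ≤ t - 1 ∧
      m = blockProd k x₁ 0 l * blockProd k x₂ 0 (t - l) } := by
    rw [hI, hJ, ← Ideal.span_union, Ideal.colon_span, Submodule.colon_union,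
      (Submodule.colon_eq_top_iff_subset _).2 Ideal.subset_span, top_inf_eq]
  have hJI' : J'.colon I' = J'.colon { m | ∃ l : ℕ, 1 ≤ l ∧ l ≤ t - 1 ∧
      m = blockProd k x₁ 1 l * blockProd k x₂ 1 (t - l) } := by
    rw [hI', hJ', Ideal.colon_span, Submodule.colon_union,
      (Submodule.colon_eq_top_iff_subset _).2 (Set.subset_union_right.trans Ideal.subset_span),
      inf_top_eq]
  have hcolon : ∀ l, 1 ≤ l → l ≤ t - 1 → ∀ r,
      (r * (blockProd k x₁ 0 l * blockProd k x₂ 0 (t - l)) ∈ J ↔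
        r * (blockProd k x₁ 1 l * blockProd k x₂ 1 (t - l)) ∈ J') := fun l hl₁ hl₂ r => by
    simpa [hJ, hJ'] using SetLike.ext_iff.mp (colon_blockProd_mul_blockProd_eq k hx₁ hx₂ hl₁ hl₂) r
  ext r
  rw [hJI, hJI']
  simp only [Submodule.mem_colon, smul_eq_mul, Set.mem_ofPred_eq, forall_exists_index, and_imp]
  constructor
  · rintro h _ l hl₁ hl₂ rfl
    exact (hcolon l hl₁ hl₂ r).1 (h _ l hl₁ hl₂ rfl)
  · rintro h _ l hl₁ hl₂ rfl
    exact (hcolon l hl₁ hl₂ r).2 (h _ l hl₁ hl₂ rfl)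

/-- The colon-ideal identity `J : I = J' : I'` linking the `t`-path ideal of the
suspension of a one-edge graph to the smaller ideal `I'`. -/
theorem stmt16 {k : Type*} [Field k] {n t : ℕ} (ht : 3 ≤ t) (hn : 2 ≤ n)
    (x₁ x₂ : Fin n) (hx₁ : (x₁ : ℕ) = 0) (hx₂ : (x₂ : ℕ) = 1)
    (J I J' I' : Ideal (MvPolynomial (Fin n × Fin t) k))
    (hJ : J = Ideal.span { m | ∃ i : Fin n, m = blockProd k i 0 t })
    (hI : I = J ⊔ Ideal.span { m | ∃ l : ℕ, 1 ≤ l ∧ l ≤ t - 1 ∧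
      m = blockProd k x₁ 0 l * blockProd k x₂ 0 (t - l) })
    (hJ' : J' = Ideal.span ({blockProd k x₁ 1 t, blockProd k x₂ 1 t} ∪
      { m | ∃ i : Fin n, 2 ≤ (i : ℕ) ∧ m = blockProd k i 0 t }))
    (hI' : I' = Ideal.span ({ m | ∃ l : ℕ, 1 ≤ l ∧ l ≤ t - 1 ∧
        m = blockProd k x₁ 1 l * blockProd k x₂ 1 (t - l) } ∪
      { m | ∃ i : Fin n, 2 ≤ (i : ℕ) ∧ m = blockProd k i 0 t })) :
    Submodule.colon J I = Submodule.colon J' I' :=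
  stmt16_general x₁ x₂ hx₁ hx₂ J I J' I' hJ hI hJ' hI'
end

section
/- Let G be the star graph with edges {x_1 x_r, ..., x_{r−1} x_r} (3 ≤ r ≤ n, with possible isolated vertices x_{r+1},...,x_n) and t ≥ 2. Then the depolarized t-path ideal satisfies depol(P_t(Σ_t G)) = (x_i^t : i ∈ [n]) + x_r · ( (x_i^l x_r^{t−1−l} : i ∈ [r−1], 1 ≤ l ≤ t−1) + (x_i^l x_{i'}^{t−1−l} : 1 ≤ i < i' ≤ r−1, 1 ≤ l ≤ t−2) ). -/
/-!
Two consecutive vertices of a path in `Σ_t G` either lie over the same vertex of `G` or are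
adjacent vertices of `G` itself. Hence the depolarized monomial of a path is a word in the
variables whose letter changes only across edges of `G`. In a star every edge contains the
center `c`, which an injective path visits at most once, so the word is `x_a^t` or
`x_a^j x_c x_b^(t-1-j)`, where `a` (if `j > 0`) and `b` (if `j < t - 1`) are `c` or leaves,
distinct when both are leaves; each such monomial is a generator of the right-hand side, up
to the factor `x_c`. Conversely every generator is the monomial of a path that runs down the
attached path of a leaf, through the center and up another attached path.
-/

open MvPolynomial

open Finset

theorem eq_of_forall_eq_succ {α : Type*} {g : ℕ → α} {lo hi : ℕ}
    (h : ∀ m, lo ≤ m → m < hi → g m = g (m + 1)) {m m' : ℕ}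
    (hlo : lo ≤ m) (hmm' : m ≤ m') (hhi : m' ≤ hi) : g m = g m' := by
  induction m', hmm' using Nat.le_induction with
  | base => rfl
  | succ m' hmm' ih => exact (ih (by omega)).trans (h m' (by omega) (by omega))

theorem prod_range_eq_pow_of_forall_eq_succ {M : Type*} [CommMonoid M] {g : ℕ → M} {t : ℕ}
    (h : ∀ m, m + 1 < t → g m = g (m + 1)) : ∏ m ∈ range t, g m = g 0 ^ t :=
  calc ∏ m ∈ range t, g m = ∏ _m ∈ range t, g 0 :=
        prod_congr rfl fun m hm => (eq_of_forall_eq_succ (hi := t - 1)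
          (fun m _ hm => h m (by omega)) le_rfl (Nat.zero_le m) (by simp at hm; omega)).symm
    _ = g 0 ^ t := by rw [prod_const, card_range]

theorem prod_range_eq_of_forall_eq_succ {M : Type*} [CommMonoid M] {g : ℕ → M} {t j : ℕ}
    (hj : j < t) (h : ∀ m, m + 1 < t → m ≠ j → m + 1 ≠ j → g m = g (m + 1)) :
    ∏ m ∈ range t, g m = g 0 ^ j * g j * g (t - 1) ^ (t - 1 - j) := by
  have hleft : ∏ m ∈ range j, g m = g 0 ^ j :=
    prod_range_eq_pow_of_forall_eq_succ fun m hm => h m (by omega) (by omega) (by omega)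
  have hright : ∏ m ∈ Ico (j + 1) t, g m = g (t - 1) ^ (t - 1 - j) :=
    calc ∏ m ∈ Ico (j + 1) t, g m = ∏ _m ∈ Ico (j + 1) t, g (t - 1) :=
          prod_congr rfl fun m hm => eq_of_forall_eq_succ (lo := j + 1) (hi := t - 1)
            (fun m h₁ h₂ => h m (by omega) (by omega) (by omega)) (mem_Ico.1 hm).1
            (by have := (mem_Ico.1 hm).2; omega) le_rfl
      _ = g (t - 1) ^ (t - 1 - j) := by rw [prod_const, Nat.card_Ico, Nat.sub_sub, add_comm]
  rw [← prod_range_mul_prod_Ico g (Nat.succ_le_of_lt hj), prod_range_succ, hleft, hright]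

section Suspension

variable {V : Type*} {G : SimpleGraph V} {t : ℕ}

theorem suspension_adj_cases {a b : V ⊕ V × Fin (t - 1)} (h : (suspension G t).Adj a b) :
    Sum.elim id Prod.fst a = Sum.elim id Prod.fst b ∨
      ∃ u v, a = .inl u ∧ b = .inl v ∧ G.Adj u v := by
  rcases a with u | ⟨u, i⟩ <;> rcases b with v | ⟨v, j⟩
  · exact .inr ⟨u, v, rfl, rfl, h⟩
  · exact .inl h.1
  · exact .inl h.1.symm
  · exact .inl h.1

theorem depolPathIdeal_eq_span (k : Type*) [CommRing k] (G : SimpleGraph V) (t : ℕ) :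
    depolPathIdeal k G t = Ideal.span {m | ∃ p : Fin t → V ⊕ V × Fin (t - 1),
      IsPathOn (suspension G t) p ∧ m = ∏ i, X (Sum.elim id Prod.fst (p i))} := by
  rw [depolPathIdeal, pathIdeal, Ideal.map_span]
  congr 1
  ext m
  simp only [Set.mem_image, Set.mem_ofPred_eq]
  constructor
  · rintro ⟨_, ⟨p, hp, rfl⟩, rfl⟩
    exact ⟨p, hp, by simp⟩
  · rintro ⟨p, hp, rfl⟩
    exact ⟨_, ⟨p, hp, rfl⟩, by simp⟩

variable {k : Type*} [CommRing k]

theorem IsPathOn.prod_X_depol_mem {p : Fin t → V ⊕ V × Fin (t - 1)}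
    (hp : IsPathOn (suspension G t) p) :
    ∏ i, (X (Sum.elim id Prod.fst (p i)) : MvPolynomial V k) ∈ depolPathIdeal k G t := by
  rw [depolPathIdeal_eq_span]
  exact Ideal.subset_span ⟨p, hp, rfl⟩

theorem prod_X_depol_eq_prod_range {p : Fin t → V ⊕ V × Fin (t - 1)} {q : ℕ → V}
    (hq : ∀ m (h : m < t), Sum.elim id Prod.fst (p ⟨m, h⟩) = q m) :
    ∏ i, (X (Sum.elim id Prod.fst (p i)) : MvPolynomial V k) = ∏ m ∈ range t, X (q m) := by
  rw [← Fin.prod_univ_eq_prod_range]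
  exact prod_congr rfl fun i _ => congrArg X (hq i i.2)

theorem prod_X_depol_eq_pow {p : Fin t → V ⊕ V × Fin (t - 1)} {q : ℕ → V}
    (hq : ∀ m (h : m < t), Sum.elim id Prod.fst (p ⟨m, h⟩) = q m)
    (h : ∀ m, m + 1 < t → q m = q (m + 1)) :
    ∏ i, (X (Sum.elim id Prod.fst (p i)) : MvPolynomial V k) = X (q 0) ^ t := by
  rw [prod_X_depol_eq_prod_range hq,
    prod_range_eq_pow_of_forall_eq_succ fun m hm => congrArg X (h m hm)]

theorem prod_X_depol_eq_of_forall_eq_succ {p : Fin t → V ⊕ V × Fin (t - 1)} {q : ℕ → V}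
    {j : ℕ} (hj : j < t) (hq : ∀ m (h : m < t), Sum.elim id Prod.fst (p ⟨m, h⟩) = q m)
    (h : ∀ m, m + 1 < t → m ≠ j → m + 1 ≠ j → q m = q (m + 1)) :
    ∏ i, (X (Sum.elim id Prod.fst (p i)) : MvPolynomial V k) =
      X (q 0) ^ j * X (q j) * X (q (t - 1)) ^ (t - 1 - j) := by
  rw [prod_X_depol_eq_prod_range hq,
    prod_range_eq_of_forall_eq_succ hj fun m hm h₁ h₂ => congrArg X (h m hm h₁ h₂)]

end Suspension

section Paths

variable {V : Type*} {G : SimpleGraph V} {t : ℕ} {k : Type*} [CommRing k]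

/-- The path runs down the attached path of `u` to `u`, crosses to `w` and runs up the
attached path of `w`. -/
theorem exists_path_prod_X_depol_eq {u w : V} {l : ℕ} (hl : l < t) (huw : l ≠ 0 → G.Adj u w) :
    ∃ p : Fin t → V ⊕ V × Fin (t - 1), IsPathOn (suspension G t) p ∧
      ∏ i, (X (Sum.elim id Prod.fst (p i)) : MvPolynomial V k) =
        X u ^ l * X w * X w ^ (t - 1 - l) := by
  have hne : l ≠ 0 → u ≠ w := fun h => G.ne_of_adj (huw h)
  let p : Fin t → V ⊕ V × Fin (t - 1) := fun m =>
    if h₁ : (m : ℕ) + 1 < l then .inr (u, ⟨l - 2 - m, by omega⟩)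
    else if h₂ : (m : ℕ) + 1 = l then .inl u
    else if h₃ : (m : ℕ) = l then .inl w
    else .inr (w, ⟨m - l - 1, by have := m.isLt; omega⟩)
  have hpath : IsPathOn (suspension G t) p := by
    refine ⟨fun a b hab => ?_, fun m hm => ?_⟩
    · simp only [p] at hab
      split_ifs at hab <;>
        simp only [Sum.inr.injEq, Sum.inl.injEq, Prod.mk.injEq, Fin.mk.injEq] at hab <;>
        first
          | exact Fin.ext (by omega)
          | exact absurd hab.2 (by omega)
          | exact absurd hab (hne (by omega))
          | exact absurd hab.symm (hne (by omega))
          | exact absurd hab.1 (hne (by omega))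
          | exact absurd hab.1.symm (hne (by omega))
    · simp only [p]
      split_ifs <;>
        first
          | omega
          | exact huw (by omega)
          | (refine ⟨rfl, ?_⟩; simp only; omega)
  refine ⟨p, hpath, ?_⟩
  rw [prod_X_depol_eq_of_forall_eq_succ (q := fun m => if m < l then u else w) hl
    (fun m hm => by simp only [p]; split_ifs <;> simp <;> omega)
    (fun m hm h₁ h₂ => by split_ifs <;> first | rfl | omega)]
  rcases Nat.eq_zero_or_pos l with rfl | hl₀
  · simp
  · simp [hl₀, show ¬ t - 1 < l by omega]

/-- The path runs down the attached path of `u` to `u`, through `w` to `v` and up the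
attached path of `v`. -/
theorem exists_path_prod_X_depol_eq_of_adj_of_adj {u w v : V} {l : ℕ} (hl₁ : 1 ≤ l)
    (hl₂ : l + 1 < t) (huw : G.Adj u w) (hwv : G.Adj w v) (huv : u ≠ v) :
    ∃ p : Fin t → V ⊕ V × Fin (t - 1), IsPathOn (suspension G t) p ∧
      ∏ i, (X (Sum.elim id Prod.fst (p i)) : MvPolynomial V k) =
        X u ^ l * X w * X v ^ (t - 1 - l) := by
  have huw' := G.ne_of_adj huw
  have hwv' := G.ne_of_adj hwv
  let p : Fin t → V ⊕ V × Fin (t - 1) := fun m =>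
    if h₁ : (m : ℕ) + 1 < l then .inr (u, ⟨l - 2 - m, by omega⟩)
    else if h₂ : (m : ℕ) + 1 = l then .inl u
    else if h₃ : (m : ℕ) = l then .inl w
    else if h₄ : (m : ℕ) = l + 1 then .inl v
    else .inr (v, ⟨m - l - 2, by have := m.isLt; omega⟩)
  have hpath : IsPathOn (suspension G t) p := by
    refine ⟨fun a b hab => ?_, fun m hm => ?_⟩
    · simp only [p] at hab
      split_ifs at hab <;>
        simp only [Sum.inr.injEq, Sum.inl.injEq, Prod.mk.injEq, Fin.mk.injEq] at hab <;>
        first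
          | exact Fin.ext (by omega)
          | exact absurd hab.2 (by omega)
          | exact absurd hab huw' | exact absurd hab.symm huw'
          | exact absurd hab hwv' | exact absurd hab.symm hwv'
          | exact absurd hab huv | exact absurd hab.symm huv
          | exact absurd hab.1 huv | exact absurd hab.1.symm huv
    · simp only [p]
      split_ifs <;>
        first
          | omega
          | exact huw
          | exact hwv
          | (refine ⟨rfl, ?_⟩; simp only; omega)
  refine ⟨p, hpath, ?_⟩
  rw [prod_X_depol_eq_of_forall_eq_succ (j := l)
    (q := fun m => if m < l then u else if m = l then w else v)
    (by omega) (fun m hm => by simp only [p]; split_ifs <;> simp <;> omega)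
    (fun m hm h₁ h₂ => by split_ifs <;> first | rfl | omega)]
  simp [show 0 < l by omega, show ¬ t - 1 < l by omega, show t - 1 ≠ l by omega]

end Paths

section Star

variable {V : Type*} {G : SimpleGraph V} {t : ℕ} {p : Fin t → V ⊕ V × Fin (t - 1)} {q : ℕ → V}
  {c : V} {j : ℕ}

theorem IsPathOn.adj_of_depol_ne (hp : IsPathOn (suspension G t) p)
    (hq : ∀ m (h : m < t), Sum.elim id Prod.fst (p ⟨m, h⟩) = q m) {m : ℕ} (hm : m + 1 < t)
    (hne : q m ≠ q (m + 1)) :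
    p ⟨m, by omega⟩ = .inl (q m) ∧ p ⟨m + 1, hm⟩ = .inl (q (m + 1)) ∧
      G.Adj (q m) (q (m + 1)) := by
  rcases suspension_adj_cases (hp.2 m hm) with heq | ⟨u, v, hu, hv, huv⟩
  · exact absurd ((hq m _).symm.trans (heq.trans (hq (m + 1) hm))) hne
  · obtain rfl : u = q m := by simpa [hu] using hq m (by omega)
    obtain rfl : v = q (m + 1) := by simpa [hv] using hq (m + 1) hm
    exact ⟨hu, hv, huv⟩

theorem IsPathOn.depol_eq_succ_of_star (hp : IsPathOn (suspension G t) p)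
    (hq : ∀ m (h : m < t), Sum.elim id Prod.fst (p ⟨m, h⟩) = q m)
    (hstar : ∀ a b, G.Adj a b → a = c ∨ b = c) :
    (∀ m, m + 1 < t → q m = q (m + 1)) ∨
      ∃ j, ∃ hj : j < t, p ⟨j, hj⟩ = .inl c ∧
        ∀ m, m + 1 < t → m ≠ j → m + 1 ≠ j → q m = q (m + 1) := by
  by_cases hvisit : ∃ j, ∃ hj : j < t, p ⟨j, hj⟩ = .inl c
  · obtain ⟨j, hj, hpj⟩ := hvisit
    refine .inr ⟨j, hj, hpj, fun m hm h₁ h₂ => ?_⟩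
    by_contra hne
    obtain ⟨e₁, e₂, hadj⟩ := hp.adj_of_depol_ne hq hm hne
    rcases hstar _ _ hadj with h | h
    · exact h₁ (Fin.mk.inj_iff.1 (hp.1 ((h ▸ e₁).trans hpj.symm)))
    · exact h₂ (Fin.mk.inj_iff.1 (hp.1 ((h ▸ e₂).trans hpj.symm)))
  · simp only [not_exists] at hvisit
    refine .inl fun m hm => ?_
    by_contra hne
    obtain ⟨e₁, e₂, hadj⟩ := hp.adj_of_depol_ne hq hm hne
    rcases hstar _ _ hadj with h | h
    · exact hvisit m _ (h ▸ e₁)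
    · exact hvisit (m + 1) hm (h ▸ e₂)

theorem IsPathOn.exists_pred_of_depol_zero_ne (hp : IsPathOn (suspension G t) p)
    (hq : ∀ m (h : m < t), Sum.elim id Prod.fst (p ⟨m, h⟩) = q m) (hj : j < t)
    (hpj : p ⟨j, hj⟩ = .inl c) (hsteps : ∀ m, m + 1 < t → m ≠ j → m + 1 ≠ j → q m = q (m + 1))
    (h₀ : q 0 ≠ c) :
    ∃ h : 0 < j, p ⟨j - 1, by omega⟩ = .inl (q 0) ∧ G.Adj (q 0) c := by
  have hqj : q j = c := by simpa [hpj] using (hq j hj).symm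
  have hj₀ : 0 < j := Nat.pos_of_ne_zero fun h => h₀ (h ▸ hqj)
  have hpred : q (j - 1) = q 0 := (eq_of_forall_eq_succ (lo := 0) (hi := j - 1)
    (fun m _ hm => hsteps m (by omega) (by omega) (by omega)) le_rfl (Nat.zero_le _) le_rfl).symm
  have hsucc : j - 1 + 1 = j := by omega
  obtain ⟨e, -, hadj⟩ := hp.adj_of_depol_ne hq (m := j - 1) (by omega)
    (by rw [hpred, hsucc, hqj]; exact h₀)
  rw [hpred, hsucc, hqj] at hadj
  exact ⟨hj₀, hpred ▸ e, hadj⟩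

theorem IsPathOn.exists_succ_of_depol_last_ne (hp : IsPathOn (suspension G t) p)
    (hq : ∀ m (h : m < t), Sum.elim id Prod.fst (p ⟨m, h⟩) = q m) (hj : j < t)
    (hpj : p ⟨j, hj⟩ = .inl c) (hsteps : ∀ m, m + 1 < t → m ≠ j → m + 1 ≠ j → q m = q (m + 1))
    (hlast : q (t - 1) ≠ c) :
    ∃ h : j + 1 < t, p ⟨j + 1, h⟩ = .inl (q (t - 1)) ∧ G.Adj c (q (t - 1)) := by
  have hqj : q j = c := by simpa [hpj] using (hq j hj).symm
  have hjt : j + 1 < t := by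
    by_contra h
    exact hlast (by rw [show t - 1 = j by omega, hqj])
  have hsucc : q (j + 1) = q (t - 1) := eq_of_forall_eq_succ (lo := j + 1) (hi := t - 1)
    (fun m h₁ h₂ => hsteps m (by omega) (by omega) (by omega)) le_rfl (by omega) le_rfl
  obtain ⟨-, e, hadj⟩ := hp.adj_of_depol_ne hq hjt (by rw [hqj, hsucc]; exact hlast.symm)
  rw [hqj, hsucc] at hadj
  exact ⟨hjt, hsucc ▸ e, hadj⟩

end Star

noncomputable def depolStarIdeal (k : Type*) [CommRing k] {n : ℕ} (r t : ℕ) (c : Fin n) :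
    Ideal (MvPolynomial (Fin n) k) :=
  Ideal.span { m | ∃ i : Fin n, m = (X i : MvPolynomial (Fin n) k) ^ t } ⊔
    Ideal.span {(X c : MvPolynomial (Fin n) k)} *
      (Ideal.span { m | ∃ (i : Fin n) (l : ℕ), (i : ℕ) < r - 1 ∧ 1 ≤ l ∧ l ≤ t - 1 ∧
          m = (X i : MvPolynomial (Fin n) k) ^ l * X c ^ (t - 1 - l) } ⊔
        Ideal.span { m | ∃ (i i' : Fin n) (l : ℕ), (i : ℕ) < (i' : ℕ) ∧ (i' : ℕ) < r - 1 ∧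
          1 ≤ l ∧ l ≤ t - 2 ∧
          m = (X i : MvPolynomial (Fin n) k) ^ l * X i' ^ (t - 1 - l) })

section StarIdeal

variable {k : Type*} [CommRing k] {n r t : ℕ} {c : Fin n}

theorem X_pow_mem_depolStarIdeal (v : Fin n) : X v ^ t ∈ depolStarIdeal k r t c :=
  Ideal.mem_sup_left (Ideal.subset_span ⟨v, rfl⟩)

theorem X_mul_X_pow_mul_X_pow_mem_depolStarIdeal {i : Fin n} {l : ℕ} (hi : (i : ℕ) < r - 1)
    (hl₁ : 1 ≤ l) (hl₂ : l ≤ t - 1) :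
    X c * (X i ^ l * X c ^ (t - 1 - l)) ∈ depolStarIdeal k r t c :=
  Ideal.mem_sup_right <| Ideal.mul_mem_mul (Ideal.mem_span_singleton_self _) <|
    Ideal.mem_sup_left <| Ideal.subset_span ⟨i, l, hi, hl₁, hl₂, rfl⟩

theorem X_pow_mul_X_mul_X_pow_mem_depolStarIdeal {a b : Fin n} {l : ℕ} (ha : (a : ℕ) < r - 1)
    (hb : (b : ℕ) < r - 1) (hab : a ≠ b) (hl₁ : 1 ≤ l) (hl₂ : l ≤ t - 2) :
    X a ^ l * X c * X b ^ (t - 1 - l) ∈ depolStarIdeal k r t c := by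
  have mem {a b : Fin n} {l : ℕ} (hab : (a : ℕ) < b) (hb : (b : ℕ) < r - 1) (hl₁ : 1 ≤ l)
      (hl₂ : l ≤ t - 2) : X c * (X a ^ l * X b ^ (t - 1 - l)) ∈ depolStarIdeal k r t c :=
    Ideal.mem_sup_right <| Ideal.mul_mem_mul (Ideal.mem_span_singleton_self _) <|
      Ideal.mem_sup_right <| Ideal.subset_span ⟨a, b, l, hab, hb, hl₁, hl₂, rfl⟩
  rcases Nat.lt_or_gt_of_ne (Fin.val_ne_of_ne hab) with h | h
  · convert mem h hb hl₁ hl₂ using 1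
    ring
  · convert mem h ha (l := t - 1 - l) (by omega) (by omega) using 1
    rw [show t - 1 - (t - 1 - l) = l by omega]
    ring

theorem depolStarIdeal_le_depolPathIdeal {G : SimpleGraph (Fin n)}
    (hG : ∀ a b : Fin n, G.Adj a b ↔ (((a : ℕ) < r - 1 ∧ b = c) ∨ ((b : ℕ) < r - 1 ∧ a = c)))
    (ht : 0 < t) :
    depolStarIdeal k r t c ≤ depolPathIdeal k G t := by
  have hadj (i : Fin n) (hi : (i : ℕ) < r - 1) : G.Adj i c := (hG i c).2 (.inl ⟨hi, rfl⟩)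
  refine sup_le (Ideal.span_le.2 ?_) ?_
  · rintro _ ⟨v, rfl⟩
    obtain ⟨p, hp, hprod⟩ := exists_path_prod_X_depol_eq (G := G) (k := k) (u := v) (w := v)
      ht (absurd rfl)
    have hpow : (X v : MvPolynomial (Fin n) k) ^ 0 * X v * X v ^ (t - 1 - 0) = X v ^ t := by
      rw [pow_zero, one_mul, ← pow_succ', Nat.sub_zero, Nat.sub_add_cancel ht]
    exact hpow ▸ hprod ▸ hp.prod_X_depol_mem
  rw [Ideal.mul_sup, Ideal.span_mul_span', Ideal.span_mul_span', Set.singleton_mul,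
    Set.singleton_mul]
  refine sup_le (Ideal.span_le.2 ?_) (Ideal.span_le.2 ?_)
  · rintro _ ⟨_, ⟨i, l, hi, hl₁, hl₂, rfl⟩, rfl⟩
    obtain ⟨p, hp, hprod⟩ := exists_path_prod_X_depol_eq (k := k) (t := t) (u := i) (w := c) (l := l)
      (by omega) fun _ => hadj i hi
    simp only [SetLike.mem_coe]
    rw [mul_left_comm, ← mul_assoc, ← hprod]
    exact hp.prod_X_depol_mem
  · rintro _ ⟨_, ⟨i, i', l, hii', hi', hl₁, hl₂, rfl⟩, rfl⟩
    obtain ⟨p, hp, hprod⟩ := exists_path_prod_X_depol_eq_of_adj_of_adj (k := k) (t := t)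
      (u := i) (w := c) (v := i') (l := l) hl₁ (by omega) (hadj i (by omega)) (hadj i' hi').symm
      (Fin.ne_of_val_ne hii'.ne)
    simp only [SetLike.mem_coe]
    rw [mul_left_comm, ← mul_assoc, ← hprod]
    exact hp.prod_X_depol_mem

end StarIdeal

theorem IsPathOn.prod_X_depol_mem_depolStarIdeal {k : Type*} [CommRing k] {n r t : ℕ}
    {c : Fin n} {G : SimpleGraph (Fin n)} (hc : (c : ℕ) = r - 1)
    (hG : ∀ a b : Fin n, G.Adj a b ↔ (((a : ℕ) < r - 1 ∧ b = c) ∨ ((b : ℕ) < r - 1 ∧ a = c)))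
    {p : Fin t → Fin n ⊕ Fin n × Fin (t - 1)} (hp : IsPathOn (suspension G t) p) :
    ∏ i, (X (Sum.elim id Prod.fst (p i)) : MvPolynomial (Fin n) k) ∈ depolStarIdeal k r t c := by
  set q : ℕ → Fin n := fun m => if h : m < t then Sum.elim id Prod.fst (p ⟨m, h⟩) else c
  have hq (m : ℕ) (h : m < t) : Sum.elim id Prod.fst (p ⟨m, h⟩) = q m := by simp [q, h]
  have hstar (a b : Fin n) (h : G.Adj a b) : a = c ∨ b = c := by
    rcases (hG a b).1 h with h | h
    exacts [.inr h.2, .inl h.2]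
  have hleaf (a : Fin n) (h : G.Adj a c) : (a : ℕ) < r - 1 := by
    rcases (hG a c).1 h with h | h
    exacts [h.1, by omega]
  rcases hp.depol_eq_succ_of_star hq hstar with hconst | ⟨j, hj, hpj, hsteps⟩
  · rw [prod_X_depol_eq_pow hq hconst]
    exact X_pow_mem_depolStarIdeal _
  have hqj : q j = c := by simpa [hpj] using (hq j hj).symm
  rw [prod_X_depol_eq_of_forall_eq_succ hj hq hsteps, hqj]
  by_cases h₀ : q 0 = c <;> by_cases hlast : q (t - 1) = c
  · rw [h₀, hlast, ← pow_succ, ← pow_add, show j + 1 + (t - 1 - j) = t by omega]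
    exact X_pow_mem_depolStarIdeal _
  · obtain ⟨hjt, -, hadj⟩ := hp.exists_succ_of_depol_last_ne hq hj hpj hsteps hlast
    have := X_mul_X_pow_mul_X_pow_mem_depolStarIdeal (k := k) (t := t) (c := c) (hleaf _ hadj.symm)
      (l := t - 1 - j) (by omega) (by omega)
    rw [show t - 1 - (t - 1 - j) = j by omega] at this
    rw [h₀]
    convert this using 1
    ring
  · obtain ⟨hj₀, -, hadj⟩ := hp.exists_pred_of_depol_zero_ne hq hj hpj hsteps h₀
    have := X_mul_X_pow_mul_X_pow_mem_depolStarIdeal (k := k) (t := t) (c := c) (hleaf _ hadj)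
      (l := j) hj₀ (by omega)
    rw [hlast]
    convert this using 1
    ring
  · obtain ⟨hj₀, e₀, hadj₀⟩ := hp.exists_pred_of_depol_zero_ne hq hj hpj hsteps h₀
    obtain ⟨hjt, e₁, hadj₁⟩ := hp.exists_succ_of_depol_last_ne hq hj hpj hsteps hlast
    have hne : q 0 ≠ q (t - 1) := fun h => by
      have := Fin.mk.inj_iff.1 (hp.1 (e₀.trans (h ▸ e₁.symm)))
      omega
    exact X_pow_mul_X_mul_X_pow_mem_depolStarIdeal (hleaf _ hadj₀) (hleaf _ hadj₁.symm) hne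
      hj₀ (by omega)

theorem stmt19_general {k : Type*} [Field k] {n r : ℕ}
    (t : ℕ) (ht : 2 ≤ t) (G : SimpleGraph (Fin n)) (c : Fin n) (hc : (c : ℕ) = r - 1)
    (hG : ∀ a b : Fin n, G.Adj a b ↔
      (((a : ℕ) < r - 1 ∧ b = c) ∨ ((b : ℕ) < r - 1 ∧ a = c))) :
    depolPathIdeal k G t =
      Ideal.span { m | ∃ i : Fin n, m = (X i : MvPolynomial (Fin n) k) ^ t } ⊔
      Ideal.span {(X c : MvPolynomial (Fin n) k)} *
        (Ideal.span { m | ∃ (i : Fin n) (l : ℕ), (i : ℕ) < r - 1 ∧ 1 ≤ l ∧ l ≤ t - 1 ∧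
            m = (X i : MvPolynomial (Fin n) k) ^ l * X c ^ (t - 1 - l) } ⊔
         Ideal.span { m | ∃ (i i' : Fin n) (l : ℕ), (i : ℕ) < (i' : ℕ) ∧ (i' : ℕ) < r - 1 ∧
            1 ≤ l ∧ l ≤ t - 2 ∧
            m = (X i : MvPolynomial (Fin n) k) ^ l * X i' ^ (t - 1 - l) }) := by
  refine le_antisymm ?_ (depolStarIdeal_le_depolPathIdeal hG (by omega))
  rw [depolPathIdeal_eq_span, Ideal.span_le]
  rintro _ ⟨p, hp, rfl⟩
  exact hp.prod_X_depol_mem_depolStarIdeal hc hG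

/-- For the star graph `G` with center `x_r`, leaves `x_1, …, x_{r−1}` (`3 ≤ r ≤ n`) and
possible isolated vertices, and `t ≥ 2`, the depolarized `t`-path ideal of `Σ_t G` equals
`(x_i^t : i ∈ [n]) + x_r·((x_i^l x_r^{t−1−l} : i < r, 1 ≤ l ≤ t−1)
  + (x_i^l x_{i'}^{t−1−l} : i < i' < r, 1 ≤ l ≤ t−2))`. -/
theorem stmt19 {k : Type*} [Field k] {n r : ℕ} (hr : 3 ≤ r) (hrn : r ≤ n)
    (t : ℕ) (ht : 2 ≤ t) (G : SimpleGraph (Fin n)) (c : Fin n) (hc : (c : ℕ) = r - 1)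
    (hG : ∀ a b : Fin n, G.Adj a b ↔
      (((a : ℕ) < r - 1 ∧ b = c) ∨ ((b : ℕ) < r - 1 ∧ a = c))) :
    depolPathIdeal k G t =
      Ideal.span { m | ∃ i : Fin n, m = (X i : MvPolynomial (Fin n) k) ^ t } ⊔
      Ideal.span {(X c : MvPolynomial (Fin n) k)} *
        (Ideal.span { m | ∃ (i : Fin n) (l : ℕ), (i : ℕ) < r - 1 ∧ 1 ≤ l ∧ l ≤ t - 1 ∧
            m = (X i : MvPolynomial (Fin n) k) ^ l * X c ^ (t - 1 - l) } ⊔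
         Ideal.span { m | ∃ (i i' : Fin n) (l : ℕ), (i : ℕ) < (i' : ℕ) ∧ (i' : ℕ) < r - 1 ∧
            1 ≤ l ∧ l ≤ t - 2 ∧
            m = (X i : MvPolynomial (Fin n) k) ^ l * X i' ^ (t - 1 - l) }) :=
  stmt19_general t ht G c hc hG
end
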